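/- arXiv:1611.07096 — 3 statements merged into one kernel-verified Lean document; each statement's English description precedes it below -/
import Mathlib

section
/- If A ∈ ℤ^{n×d} is totally unimodular and b ∈ ℤⁿ, then the polyhedron P = {y ∈ ℝᵈ : Ay ≤ b, 0 ≤ y ≤ 1} is integral: every vertex (extreme point) of P has all coordinates in {0, 1}. Consequently, for any linear objective c ∈ ℝᵈ, if P is nonempty then the minimum of cᵀy over P is attained at a point of {0,1}ᵈ ∩ P. -/
/-!
At an extreme point `x` of `{x | G *ᵥ x ≤ h}` the tight rows of `G` have no common nonzero
kernel vector `v`, since otherwise `x ± t • v` would stay in the polyhedron for small `t`. So some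
square matrix `B` of tight rows is invertible, and `B *ᵥ x` is a subvector of `h`. If `G` is
totally unimodular, `B` is an integer matrix of determinant `±1`, hence `x = B⁻¹ *ᵥ (B *ᵥ x)` is
integral whenever `h` is (Hoffman–Kruskal). The polyhedron `{Ay ≤ b, 0 ≤ y ≤ 1}` is of this form
with `G = [A; 1; -1]`, which is again totally unimodular, so its extreme points are vertices of the
cube. A linear objective is minimised over the compact polyhedron on an exposed face, and by
Krein–Milman that face contains an extreme point of the face, hence of the polyhedron.
-/

open Matrix

open Set Filter Topology

namespace Matrix

variable {m n K R : Type*}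

lemma exists_isUnit_det_submatrix [Field K] [Fintype m] [Fintype n] [DecidableEq n]
    (M : Matrix m n K) (hM : ∀ v, M *ᵥ v = 0 → v = 0) :
    ∃ r : n → m, IsUnit (M.submatrix r id).det := by
  have hspan : Submodule.span K (range M.row) = ⊤ := by
    refine Submodule.eq_top_of_finrank_eq ?_
    rw [← rank_eq_finrank_span_row, rank, LinearMap.finrank_range_of_inj]
    exact LinearMap.ker_eq_bot.1 (ker_mulVecLin_eq_bot_iff.2 hM)
  obtain ⟨κ, a, -, hspan', hli⟩ := exists_linearIndependent' K M.row
  let e := (Module.Basis.mk hli (by rw [hspan', hspan])).indexEquiv (Pi.basisFun K n)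
  refine ⟨a ∘ e.symm, ?_⟩
  rw [← isUnit_iff_isUnit_det, ← linearIndependent_rows_iff_isUnit]
  exact hli.comp e.symm e.symm.injective

lemma IsTotallyUnimodular.exists_map_intCast_eq [CommRing R] {A : Matrix m n R}
    (hA : A.IsTotallyUnimodular) : ∃ Az : Matrix m n ℤ, Az.map (↑) = A := by
  choose s hs using hA.apply
  exact ⟨of fun i j => (s i j : ℤ), by ext i j; simp [hs]⟩

lemma IsTotallyUnimodular.det_mem_range [CommRing R] [Fintype n] [DecidableEq n]
    {A : Matrix n n R} (hA : A.IsTotallyUnimodular) : A.det ∈ range SignType.cast := by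
  simpa using (isTotallyUnimodular_iff_fintype A).1 hA n id id

lemma IsTotallyUnimodular.exists_eq_intCast_of_mulVec_eq [Fintype n] [DecidableEq n]
    {B : Matrix n n ℝ} (hB : B.IsTotallyUnimodular) (hdet : IsUnit B.det) {x : n → ℝ}
    {z : n → ℤ} (hx : B *ᵥ x = (↑) ∘ z) : ∃ w : n → ℤ, x = (↑) ∘ w := by
  obtain ⟨Bz, rfl⟩ := hB.exists_map_intCast_eq
  have hBz : IsUnit Bz.det := by
    obtain ⟨s, hs⟩ := hB.det_mem_range
    rw [← Int.cast_det, ← SignType.intCast_cast, Int.cast_inj] at hs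
    rw [← Int.cast_det] at hdet
    rw [← hs] at hdet ⊢
    clear hs
    rcases s with _ | _ | _ <;> simp_all
  refine ⟨Bz⁻¹ *ᵥ z, funext fun j => ?_⟩
  have hinv : Bz⁻¹.map (↑) * Bz.map ((↑) : ℤ → ℝ) = 1 :=
    calc _ = (Bz⁻¹ * Bz).map (Int.castRingHom ℝ) := Matrix.map_mul.symm
      _ = 1 := by rw [nonsing_inv_mul _ hBz]; simp
  calc x j = (Bz⁻¹.map (↑) *ᵥ (Bz.map (↑) *ᵥ x)) j := by rw [mulVec_mulVec, hinv, one_mulVec]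
    _ = _ := by rw [hx]; exact (RingHom.map_mulVec (Int.castRingHom ℝ) _ _ j).symm

lemma IsTotallyUnimodular.fromRows_one_fromRows_neg_one [CommRing R] [DecidableEq n]
    {A : Matrix m n R} (hA : A.IsTotallyUnimodular) :
    (fromRows A (fromRows (1 : Matrix n n R) (-1 : Matrix n n R))).IsTotallyUnimodular := by
  refine hA.fromRows_unitlike fun _ i => ?_
  rcases i with j | j
  · exact ⟨j, 1, funext fun k => by by_cases hjk : j = k <;> simp [hjk]⟩
  · exact ⟨j, -1, funext fun k => by by_cases hjk : j = k <;> simp [hjk]⟩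

variable [Fintype m] [Fintype n]

lemma eq_zero_of_mem_extremePoints_of_forall_tight {G : Matrix m n ℝ} {h : m → ℝ} {x : n → ℝ}
    (hx : x ∈ {x | G *ᵥ x ≤ h}.extremePoints ℝ) {v : n → ℝ}
    (hv : ∀ i, (G *ᵥ x) i = h i → (G *ᵥ v) i = 0) : v = 0 := by
  have hline : ∀ᶠ t in 𝓝 (0 : ℝ), G *ᵥ (x + t • v) ≤ h := by
    refine eventually_all.2 fun i => ?_
    by_cases hi : (G *ᵥ x) i = h i
    · refine Eventually.of_forall fun t => ?_
      simp [mulVec_add, mulVec_smul, hi, hv i hi]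
    · have hcont : Continuous fun t : ℝ => (G *ᵥ (x + t • v)) i := by
        simp only [mulVec_add, mulVec_smul]
        fun_prop
      exact (hcont.continuousAt.eventually_lt continuousAt_const
        (by simpa using lt_of_le_of_ne (hx.1 i) hi)).mono fun _ => le_of_lt
  obtain ⟨ε, hε, hball⟩ := Metric.eventually_nhds_iff.1 hline
  have hpos := hball (y := ε / 2) (by simp [abs_of_pos hε, hε])
  have hneg := hball (y := -(ε / 2)) (by simp [abs_of_pos hε, hε])
  have hmid : x ∈ openSegment ℝ (x + (ε / 2) • v) (x + (-(ε / 2)) • v) :=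
    ⟨1 / 2, 1 / 2, by norm_num, by norm_num, by norm_num, by module⟩
  simpa [hε.ne'] using hx.2 hpos hneg hmid

theorem IsTotallyUnimodular.exists_eq_intCast_of_mem_extremePoints
    {G : Matrix m n ℝ} (hG : G.IsTotallyUnimodular) {h : m → ℤ} {x : n → ℝ}
    (hx : x ∈ {x | G *ᵥ x ≤ (↑) ∘ h}.extremePoints ℝ) : ∃ z : n → ℤ, x = (↑) ∘ z := by
  classical
  let tight := {i // (G *ᵥ x) i = h i}
  obtain ⟨r, hr⟩ := exists_isUnit_det_submatrix (G.submatrix (Subtype.val : tight → m) id)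
    fun v hv => eq_zero_of_mem_extremePoints_of_forall_tight hx fun i hi => congrFun hv ⟨i, hi⟩
  rw [submatrix_submatrix] at hr
  exact (hG.submatrix _ id).exists_eq_intCast_of_mulVec_eq hr (funext fun k => (r k).2)

end Matrix

theorem IsCompact.exists_mem_extremePoints_isMinOn {E : Type*} [AddCommGroup E] [Module ℝ E]
    [TopologicalSpace E] [T2Space E] [IsTopologicalAddGroup E] [ContinuousSMul ℝ E]
    [LocallyConvexSpace ℝ E] {s : Set E} (hs : IsCompact s) (hne : s.Nonempty)
    (l : StrongDual ℝ E) : ∃ x ∈ s.extremePoints ℝ, IsMinOn l s x := by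
  have hface : IsExposed ℝ s ((-l).toExposed s) := ContinuousLinearMap.toExposed.isExposed
  obtain ⟨x₀, hx₀, hmin⟩ := hs.exists_isMinOn hne l.continuous.continuousOn
  obtain ⟨x, hx⟩ := (hface.isCompact hs).extremePoints_nonempty
    ⟨x₀, hx₀, fun y hy => neg_le_neg (hmin hy)⟩
  refine ⟨x, hface.isExtreme.extremePoints_subset_extremePoints hx, fun y hy => ?_⟩
  simpa using hx.1.2 y hy

/-- if `A` is totally unimodular and `b` is integral, then
`P = {y : Ay ≤ b, 0 ≤ y ≤ 1}` has all its extreme points in `{0,1}ᵈ`, and any linear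
objective attains its minimum over a nonempty `P` at a point of `{0,1}ᵈ ∩ P`. -/
theorem tu_polyhedron_integral {n d : ℕ}
    (A : Matrix (Fin n) (Fin d) ℝ)
    (hTU : ∀ (k : ℕ) (r : Fin k → Fin n) (c : Fin k → Fin d),
      Function.Injective r → Function.Injective c →
      (A.submatrix r c).det ∈ ({0, 1, -1} : Set ℝ))
    (b : Fin n → ℤ) :
    let P : Set (Fin d → ℝ) :=
      {y | (∀ i, A.mulVec y i ≤ (b i : ℝ)) ∧ ∀ j, 0 ≤ y j ∧ y j ≤ 1}
    (∀ y ∈ Set.extremePoints ℝ P, ∀ j, y j = 0 ∨ y j = 1) ∧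
      ∀ c : Fin d → ℝ, P.Nonempty →
        ∃ y ∈ P, (∀ j, y j = 0 ∨ y j = 1) ∧ ∀ z ∈ P, c ⬝ᵥ y ≤ c ⬝ᵥ z := by
  intro P
  have hA : A.IsTotallyUnimodular := fun k r c hr hc => by
    rw [SignType.range_eq, Set.pair_comm]
    exact hTU k r c hr hc
  let G := fromRows A (fromRows (1 : Matrix (Fin d) (Fin d) ℝ) (-1 : Matrix (Fin d) (Fin d) ℝ))
  let h : Fin n ⊕ (Fin d ⊕ Fin d) → ℤ := Sum.elim b (Sum.elim 1 0)
  have hP : P = {y | G *ᵥ y ≤ (↑) ∘ h} := by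
    ext y
    simp [P, G, h, fromRows_mulVec, neg_mulVec, Pi.le_def, forall_and, and_comm]
  have hvert : ∀ y ∈ P.extremePoints ℝ, ∀ j, y j = 0 ∨ y j = 1 := by
    intro y hy j
    have hbox := hy.1.2 j
    rw [hP] at hy
    obtain ⟨z, rfl⟩ := hA.fromRows_one_fromRows_neg_one.exists_eq_intCast_of_mem_extremePoints hy
    simp only [Function.comp_apply] at hbox ⊢
    have : z j = 0 ∨ z j = 1 := by
      obtain ⟨h0, h1⟩ : 0 ≤ z j ∧ z j ≤ 1 := by exact_mod_cast hbox
      omega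
    exact_mod_cast this
  have hcompact : IsCompact P := by
    refine isCompact_Icc.of_isClosed_subset ?_
      fun y hy => ⟨fun j => (hy.2 j).1, fun j => (hy.2 j).2⟩
    rw [hP]
    exact isClosed_le (by fun_prop) continuous_const
  refine ⟨hvert, fun c hne => ?_⟩
  obtain ⟨y, hy, hmin⟩ := hcompact.exists_mem_extremePoints_isMinOn hne
    (LinearMap.toContinuousLinearMap (dotProductEquiv ℝ (Fin d) c))
  exact ⟨y, hy.1, hvert y hy, fun z hz => hmin hz⟩
end

section
/- Let G = (V, A) be an arborescence (rooted directed tree with arcs pointing away from root s), and let y, y' ∈ {0,1}^V satisfy the hierarchical constraints (y_j = 1 implies y_k = 1 for the parent k of j, and similarly for y'). Then the hierarchical loss ℓ_hr(y, y') = ∑_{j∈V} c_j · 𝟙(y_j ≠ y'_j and y_k = y'_k for all ancestors k of j) equals c_s(y_s + y'_s − 2 y'_s y_s) + ∑_{(j,k)∈A} c_k (y'_k y_j + (y'_j − y'_j y'_k − y'_k) y_k). -/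
open scoped Classical

/-- on an arborescence rooted at `s` (every node reaches `s` by iterating
the parent map `p`), for hierarchically-feasible binary vectors `y, y'` the hierarchical
loss equals the affine expression
`c_s(y_s + y'_s − 2 y'_s y_s) + ∑_{(j,k)∈A} c_k (y'_k y_j + (y'_j − y'_j y'_k − y'_k) y_k)`,
where the arcs are `(p k, k)` for non-root nodes `k`. -/
theorem hierarchical_loss_affine {V : Type*} [Fintype V] [DecidableEq V]
    (s : V) (p : V → V) (hps : p s = s)
    (hreach : ∀ j : V, ∃ n : ℕ, p^[n] j = s)
    (c : V → ℝ) (y y' : V → ℝ)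
    (hy : ∀ j, y j = 0 ∨ y j = 1) (hy' : ∀ j, y' j = 0 ∨ y' j = 1)
    (hcon : ∀ k, y k = 1 → y (p k) = 1) (hcon' : ∀ k, y' k = 1 → y' (p k) = 1) :
    (c s * (if y s ≠ y' s then 1 else 0) +
        ∑ j ∈ Finset.univ.filter (fun j => j ≠ s),
          c j * (if y j ≠ y' j ∧ ∀ n ≥ 1, y (p^[n] j) = y' (p^[n] j) then 1 else 0)) =
      c s * (y s + y' s - 2 * y' s * y s) +
        ∑ k ∈ Finset.univ.filter (fun k => k ≠ s),
          c k * (y' k * y (p k) + (y' (p k) - y' (p k) * y' k - y' k) * y k) := by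
  have up : ∀ (z : V → ℝ), (∀ k, z k = 1 → z (p k) = 1) →
      ∀ n j, z j = 1 → z (p^[n] j) = 1 := by
    intro z hz n
    induction n with
    | zero => intro j h; simpa using h
    | succ n ih =>
        intro j h
        rw [Function.iterate_succ_apply]
        exact ih _ (hz _ h)
  congr 1
  · have : (if y s ≠ y' s then (1:ℝ) else 0) = y s + y' s - 2 * y' s * y s := by
      rcases hy s with h1 | h1 <;> rcases hy' s with h2 | h2 <;> rw [h1, h2] <;> norm_num
    rw [this]
  · apply Finset.sum_congr rfl
    intro k _
    congr 1
    rcases hy k with ha | ha <;> rcases hy' k with hb | hb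
    · simp [ha, hb]
    · have hB : y' (p k) = 1 := hcon' k hb
      rcases hy (p k) with hA | hA
      · have hno : ¬ (y k ≠ y' k ∧ ∀ n ≥ 1, y (p^[n] k) = y' (p^[n] k)) := by
          rintro ⟨-, h⟩
          have h1 := h 1 le_rfl
          simp [hA, hB] at h1
        rw [if_neg hno, ha, hb, hA, hB]; ring
      · have hall : ∀ n ≥ 1, y (p^[n] k) = y' (p^[n] k) := by
          intro n hn
          obtain ⟨m, rfl⟩ := Nat.exists_eq_add_of_le hn
          rw [add_comm, Function.iterate_add_apply]
          simp only [Function.iterate_one]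
          rw [up y hcon m (p k) hA, up y' hcon' m (p k) hB]
        have hne : y k ≠ y' k := by rw [ha, hb]; norm_num
        rw [if_pos ⟨hne, hall⟩, ha, hb, hA, hB]; ring
    · have hA : y (p k) = 1 := hcon k ha
      rcases hy' (p k) with hB | hB
      · have hno : ¬ (y k ≠ y' k ∧ ∀ n ≥ 1, y (p^[n] k) = y' (p^[n] k)) := by
          rintro ⟨-, h⟩
          have h1 := h 1 le_rfl
          simp [hA, hB] at h1
        rw [if_neg hno, ha, hb, hA, hB]; ring
      · have hall : ∀ n ≥ 1, y (p^[n] k) = y' (p^[n] k) := by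
          intro n hn
          obtain ⟨m, rfl⟩ := Nat.exists_eq_add_of_le hn
          rw [add_comm, Function.iterate_add_apply]
          simp only [Function.iterate_one]
          rw [up y hcon m (p k) hA, up y' hcon' m (p k) hB]
        have hne : y k ≠ y' k := by rw [ha, hb]; norm_num
        rw [if_pos ⟨hne, hall⟩, ha, hb, hA, hB]; ring
    · have hA : y (p k) = 1 := hcon k ha
      have hB : y' (p k) = 1 := hcon' k hb
      have hno : ¬ (y k ≠ y' k ∧ ∀ n ≥ 1, y (p^[n] k) = y' (p^[n] k)) := by
        rintro ⟨h, -⟩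
        exact h (ha.trans hb.symm)
      rw [if_neg hno, ha, hb, hA, hB]; ring
end

section
/- (Tightness) Let 𝒴 be a nonempty finite set, ℓ : 𝒴 × 𝒴 → ℝ with 0 ≤ ℓ ≤ L, R̂ : 𝒴 → ℝ, M = min_{y''} R̂(y''), Δ(y') = M − R̂(y'), and let ĥ be an element of argmin R̂ maximizing ℓ(·, y) over the argmin set. If the surrogate is L^ρ(y) = min{ max_{y'∈𝒴} [ℓ(y', y) + Δ(y')/ρ], L }, then there exists ρ* > 0 such that for all ρ ∈ (0, ρ*], L^ρ(y) = ℓ(ĥ, y). -/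
/-!
On the minimizers of `R̂` the penalty `(M - R̂ y') / ρ` vanishes, so there the penalized loss
is at most `ℓ(ĥ, y)`, with equality at `ĥ`. Since `𝒴` is finite, the non-minimizers sit at
least some `δ > 0` above `M` and `ℓ(·, y)` is bounded, so for small `ρ` the penalty `≤ -δ / ρ`
pushes every non-minimizer below `ℓ(ĥ, y)`. The cap `L` is then inactive because `ℓ ≤ L`.
-/

section

open Finset

variable {ι : Type*} [Fintype ι]

lemma exists_pos_add_le_of_lt (g : ι → ℝ) (a : ℝ) :
    ∃ δ > 0, ∀ z, a < g z → a + δ ≤ g z := by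
  cases isEmpty_or_nonempty ι
  · exact ⟨1, one_pos, fun z => isEmptyElim z⟩
  set gap : ι → ℝ := fun z => if a < g z then g z - a else 1
  refine ⟨univ.inf' univ_nonempty gap, ?_, fun z hz => ?_⟩
  · refine (lt_inf'_iff univ_nonempty).2 fun z _ => ?_
    dsimp only [gap]
    split_ifs with hz <;> linarith
  · have : univ.inf' univ_nonempty gap ≤ gap z := inf'_le _ (mem_univ z)
    simp only [gap, hz, if_true] at this
    linarith

lemma inf'_univ_eq_of_forall_le [Nonempty ι] {α : Type*} [LinearOrder α] {R : ι → α} {x : ι}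
    (hx : ∀ z, R x ≤ R z) :
    univ.inf' univ_nonempty R = R x :=
  le_antisymm (inf'_le _ (mem_univ x)) (le_inf' _ _ fun z _ => hx z)

lemma exists_sup'_add_penalty_eq [Nonempty ι] (f R : ι → ℝ) {x : ι} (hx : ∀ z, R x ≤ R z)
    (hfx : ∀ z, (∀ w, R z ≤ R w) → f z ≤ f x) :
    ∃ ρstar > 0, ∀ ρ : ℝ, 0 < ρ → ρ ≤ ρstar →
      univ.sup' univ_nonempty (fun z => f z + (univ.inf' univ_nonempty R - R z) / ρ) = f x := by
  obtain ⟨δ, hδ, hgap⟩ := exists_pos_add_le_of_lt R (R x)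
  set K := univ.sup' univ_nonempty f - f x + 1
  have hf_le : ∀ z, f z ≤ f x + (K - 1) := fun z => by
    have := le_sup' f (mem_univ z); linarith
  have hK : 0 < K := by linarith [hf_le x]
  refine ⟨δ / K, div_pos hδ hK, fun ρ hρ hρle => ?_⟩
  rw [inf'_univ_eq_of_forall_le hx]
  refine le_antisymm (sup'_le _ _ fun z _ => ?_) ?_
  · by_cases hz : R x < R z
    · have hKρ : ρ * K ≤ δ := (le_div_iff₀ hK).1 hρle
      have hpen : (R x - R z) / ρ ≤ -K := by
        rw [div_le_iff₀ hρ]; linarith [hgap z hz]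
      linarith [hf_le z]
    · have hRz : R z = R x := le_antisymm (not_lt.1 hz) (hx z)
      have hzmin : ∀ w, R z ≤ R w := hRz ▸ hx
      simpa [hRz] using hfx z hzmin
  · calc f x = f x + (R x - R x) / ρ := by simp
      _ ≤ _ := le_sup' (fun z => f z + (R x - R z) / ρ) (mem_univ x)

end

theorem surrogate_loss_tight_general {𝒴 : Type*} [Fintype 𝒴] [Nonempty 𝒴]
    (ℓ : 𝒴 → 𝒴 → ℝ) (L : ℝ)
    (hbdd : ∀ a b, 0 ≤ ℓ a b ∧ ℓ a b ≤ L)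
    (Rhat : 𝒴 → ℝ) (y : 𝒴) (hhat : 𝒴)
    (hmin : ∀ y'', Rhat hhat ≤ Rhat y'')
    (htie : ∀ y'', (∀ z, Rhat y'' ≤ Rhat z) → ℓ y'' y ≤ ℓ hhat y) :
    ∃ ρstar > 0, ∀ ρ : ℝ, 0 < ρ → ρ ≤ ρstar →
      min (Finset.univ.sup' Finset.univ_nonempty
        (fun y' => ℓ y' y + (Finset.univ.inf' Finset.univ_nonempty Rhat - Rhat y') / ρ)) L
        = ℓ hhat y := by
  obtain ⟨ρstar, hρstar, hsup⟩ := exists_sup'_add_penalty_eq (fun z => ℓ z y) Rhat hmin htie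
  refine ⟨ρstar, hρstar, fun ρ hρ hρle => ?_⟩
  rw [hsup ρ hρ hρle]
  exact min_eq_left (hbdd hhat y).2

/-- Tightness: for a finite output space there is `ρ* > 0` such that for
all `ρ ∈ (0, ρ*]` the truncated ρ-surrogate loss coincides with the loss `ℓ(ĥ, y)` of
the estimated-risk minimizer `ĥ` (chosen with maximal loss among minimizers). -/
theorem surrogate_loss_tight {𝒴 : Type*} [Fintype 𝒴] [Nonempty 𝒴]
    (ℓ : 𝒴 → 𝒴 → ℝ) (L : ℝ) (hL : 0 < L)
    (hbdd : ∀ a b, 0 ≤ ℓ a b ∧ ℓ a b ≤ L)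
    (Rhat : 𝒴 → ℝ) (y : 𝒴) (hhat : 𝒴)
    (hmin : ∀ y'', Rhat hhat ≤ Rhat y'')
    (htie : ∀ y'', (∀ z, Rhat y'' ≤ Rhat z) → ℓ y'' y ≤ ℓ hhat y) :
    ∃ ρstar > 0, ∀ ρ : ℝ, 0 < ρ → ρ ≤ ρstar →
      min (Finset.univ.sup' Finset.univ_nonempty
        (fun y' => ℓ y' y + (Finset.univ.inf' Finset.univ_nonempty Rhat - Rhat y') / ρ)) L
        = ℓ hhat y :=
  surrogate_loss_tight_general ℓ L hbdd Rhat y hhat hmin htie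
end
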